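/- For m1, m2 > 0, p ∈ [0,1), t ≥ 0 with t > 0 or p > 0, the inequality 2·m1·(−t − m1 + √((m1+t)² + m2(t + p·m1))) / (t + p·m1) < m1 + m2 holds; equivalently, the extreme Nash equilibrium strategy x2* = m1(m2 − m + √(m² − m·m2 − (1−p)m1·m2)) / (m − (1−p)m1 − m2), where m = m1 + m2 + t, satisfies x2* < (m1 + m2)/2. -/
import Mathlib


/-- The extreme equilibrium strategy is less than `(m1+m2)/2`. -/
theorem stmt6 (m1 m2 t p : ℝ) (hm1 : 0 < m1) (hm2 : 0 < m2) (ht : 0 ≤ t)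
    (hp0 : 0 ≤ p) (hp1 : p < 1) (htp : 0 < t ∨ 0 < p) :
    2*m1*(-t - m1 + Real.sqrt ((m1+t)^2 + m2*(t + p*m1))) / (t + p*m1) < m1 + m2 ∧
    m1*(m2 - (m1+m2+t) +
        Real.sqrt ((m1+m2+t)^2 - (m1+m2+t)*m2 - (1-p)*m1*m2)) /
      ((m1+m2+t) - (1-p)*m1 - m2) < (m1 + m2)/2 := by
  have hD : 0 < t + p*m1 := by
    rcases htp with h | h
    · nlinarith [mul_nonneg hp0 hm1.le]
    · nlinarith [mul_pos h hm1]
  have hAnn : 0 ≤ (m1+t)^2 + m2*(t + p*m1) := by positivity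
  set s := Real.sqrt ((m1+t)^2 + m2*(t + p*m1)) with hs
  have hs0 : 0 ≤ s := Real.sqrt_nonneg _
  have hs2 : s^2 = (m1+t)^2 + m2*(t + p*m1) := Real.sq_sqrt hAnn
  have hRpos : 0 < 2*m1*(m1+t) + (m1+m2)*(t+p*m1) := by
    nlinarith [mul_pos hm1 hm1, mul_nonneg hm1.le ht, mul_nonneg hm2.le hD.le, mul_nonneg hm1.le hD.le]
  have hR2 : (2*m1*s)^2 < (2*m1*(m1+t) + (m1+m2)*(t+p*m1))^2 := by
    nlinarith [hs2, mul_pos (mul_pos hm1 hD) (mul_pos hm1 hm1),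
      mul_nonneg (mul_nonneg hm1.le hD.le) (mul_nonneg hm1.le ht),
      mul_nonneg (mul_nonneg hm1.le hD.le) (mul_nonneg hm2.le ht),
      mul_nonneg (mul_pos hD hD).le (sq_nonneg (m1+m2))]
  have key : 2*m1*s < 2*m1*(m1+t) + (m1+m2)*(t+p*m1) :=
    lt_of_pow_lt_pow_left₀ 2 hRpos.le hR2
  constructor
  · rw [div_lt_iff₀ hD]
    nlinarith [key]
  · have harg : (m1+m2+t)^2 - (m1+m2+t)*m2 - (1-p)*m1*m2 = (m1+t)^2 + m2*(t + p*m1) := by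
      ring
    have hden : (m1+m2+t) - (1-p)*m1 - m2 = t + p*m1 := by ring
    rw [harg, hden, div_lt_div_iff₀ hD (by norm_num : (0:ℝ) < 2)]
    nlinarith [key]
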